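/- Consider the set S of real numbers r such that there exists u : ℝ → ℝ, differentiable on [0,1] with continuous derivative u′ on [0,1], with u(0) = 0, ∫₀¹ u(x)² dx > 0, and r = (∫₀¹ u′(x)² dx − u(1)²) / (∫₀¹ u(x)² dx). Then 0 is the least element of S: every element of S is ≥ 0, and 0 ∈ S (it is attained by u(x) = x). -/

import Mathlib

/-
Since `u 0 = 0`, the fundamental theorem of calculus gives `u 1 = ∫₀¹ u'`, and the
Cauchy–Schwarz inequality on the unit interval gives `(∫₀¹ u')² ≤ ∫₀¹ u'²`; so the numerator of
the quotient is nonnegative. The function `u x = x` makes it vanish.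
-/

open intervalIntegral

theorem sq_intervalIntegral_le_mul_intervalIntegral_sq {f : ℝ → ℝ} {a b : ℝ} (hab : a ≤ b)
    (hf : IntervalIntegrable f MeasureTheory.volume a b)
    (hf2 : IntervalIntegrable (fun x => f x ^ 2) MeasureTheory.volume a b) :
    (∫ x in a..b, f x) ^ 2 ≤ (b - a) * ∫ x in a..b, f x ^ 2 := by
  set I := ∫ x in a..b, f x
  set J := ∫ x in a..b, f x ^ 2
  rcases hab.eq_or_lt with rfl | hlt
  · simp [I]
  have hL : 0 < b - a := sub_pos.mpr hlt
  -- Cauchy–Schwarz from `0 ≤ ∫ ((b - a) f - I)²`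
  have hexpand : (∫ x in a..b, ((b - a) * f x - I) ^ 2) = (b - a) * ((b - a) * J - I ^ 2) := by
    have hpt : ∀ x, ((b - a) * f x - I) ^ 2 = (b - a) ^ 2 * f x ^ 2 - 2 * (b - a) * I * f x + I ^ 2 :=
      fun x => by ring
    simp_rw [hpt]
    rw [integral_add ((hf2.const_mul _).sub (hf.const_mul _)) intervalIntegrable_const,
      integral_sub (hf2.const_mul _) (hf.const_mul _), integral_const_mul, integral_const_mul,
      integral_const, smul_eq_mul]
    ring
  have hnonneg : 0 ≤ ∫ x in a..b, ((b - a) * f x - I) ^ 2 :=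
    integral_nonneg hab fun x _ => sq_nonneg _
  rw [hexpand] at hnonneg
  linarith [(mul_nonneg_iff_of_pos_left hL).mp hnonneg]

/-- The infimum of the Rayleigh-type quotient `(∫₀¹ u'² - u(1)²)/∫₀¹ u²` over
nonzero `C¹` functions on `[0,1]` vanishing at `0` equals `0`, i.e.
`C_Ω(-1) = 0` in one dimension; the minimum is attained (e.g. by `u x = x`). -/
theorem stmt_10 :
    IsLeast {r : ℝ | ∃ u u' : ℝ → ℝ,
      (∀ x ∈ Set.Icc (0:ℝ) 1, HasDerivAt u (u' x) x) ∧
      ContinuousOn u' (Set.Icc 0 1) ∧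
      u 0 = 0 ∧
      0 < (∫ x in (0:ℝ)..1, u x ^ 2) ∧
      r = ((∫ x in (0:ℝ)..1, u' x ^ 2) - u 1 ^ 2) / (∫ x in (0:ℝ)..1, u x ^ 2)}
      0 := by
  constructor
  · refine ⟨id, fun _ => 1, fun x _ => hasDerivAt_id x, continuousOn_const, rfl, ?_, ?_⟩ <;>
      norm_num [integral_pow]
  · rintro r ⟨u, u', hderiv, hcont, h0, hpos, rfl⟩
    rw [← Set.uIcc_of_le zero_le_one] at hderiv hcont
    have hu1 : u 1 = ∫ x in (0:ℝ)..1, u' x := by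
      rw [integral_eq_sub_of_hasDerivAt hderiv hcont.intervalIntegrable, h0, sub_zero]
    have hcs := sq_intervalIntegral_le_mul_intervalIntegral_sq zero_le_one
      hcont.intervalIntegrable (hcont.pow 2).intervalIntegrable
    rw [← hu1, sub_zero, one_mul] at hcs
    exact div_nonneg (sub_nonneg.mpr hcs) hpos.le
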